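/- For distinct positive integers n and m, \int_0^1 \frac{e_n(t) e_m(t)}{1-t}\, dt = 0, where e_n is the identity-type polynomial; the integrand extends continuously to [0,1] since (1-t) divides both e_n and e_m. -/

import Mathlib

open Polynomial MeasureTheory

/-- Falling factorial `c(c-1)⋯(c-m+1)` for real `c`. -/
noncomputable def fallFac (c : ℝ) (m : ℕ) : ℝ := ∏ i ∈ Finset.range m, (c - i)

/-- The identity-type polynomial `e_n(t) = ∑_{m=0}^n ((n)_m (-n)_m / (m!)^2) t^m`. -/
noncomputable def idPoly (n : ℕ) : Polynomial ℝ :=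
  ∑ m ∈ Finset.range (n + 1),
    Polynomial.C (fallFac (n : ℝ) m * fallFac (-(n : ℝ)) m / ((Nat.factorial m : ℝ)) ^ 2) *
      Polynomial.X ^ m

/-! The Rodrigues-type formula `(N+1)! e_{N+1} = (1 - X) D^{N+1}[X^{N+1} (1 - X)^N]` turns
`e_n(t) / (1 - t)` into a multiple of `D^n[X^n (1 - X)^(n-1)]`. For `m < n`, integrating by parts
`n` times against `e_m` moves every derivative onto `e_m`, which has degree `m < n`. The boundary
terms vanish because `X^n (1 - X)^(n-1)` has a root of order `n` at `0` and of order `n - 1`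
at `1`; the one remaining boundary term at `1` carries the factor `e_m(1) = 0`. -/

lemma fallFac_eq_eval_descPochhammer (c : ℝ) (m : ℕ) :
    fallFac c m = (descPochhammer ℝ m).eval c :=
  (descPochhammer_eval_eq_prod_range m c).symm

lemma fallFac_natCast (n m : ℕ) : fallFac n m = n.descFactorial m := by
  rw [fallFac_eq_eval_descPochhammer, descPochhammer_eval_eq_descFactorial]

lemma fallFac_neg_natCast (n m : ℕ) : fallFac (-n) m = (-1) ^ m * n.ascFactorial m := by
  have h := ascPochhammer_eval_neg_eq_descPochhammer ℝ (-(n : ℝ)) m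
  rw [neg_neg, ← Nat.cast_ascFactorial] at h
  have hsq : ((-1 : ℝ) ^ m) ^ 2 = 1 := by rw [← pow_mul, mul_comm, pow_mul, neg_one_sq, one_pow]
  rw [fallFac_eq_eval_descPochhammer]
  linear_combination (-(-1 : ℝ) ^ m) * h - (descPochhammer ℝ m).eval (-(n : ℝ)) * hsq

lemma coeff_idPoly_succ (N m : ℕ) :
    (idPoly (N + 1)).coeff m = (-1) ^ m * (N + 1).choose m * (N + m).choose m := by
  rw [idPoly, finsetSum_coeff]
  simp_rw [coeff_C_mul_X_pow]
  rw [Finset.sum_ite_eq]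
  split_ifs with hm
  · rw [fallFac_natCast, fallFac_neg_natCast,
      Nat.descFactorial_eq_factorial_mul_choose, Nat.ascFactorial_eq_factorial_mul_choose]
    push_cast
    field_simp
  · rw [Nat.choose_eq_zero_of_lt (by simpa using hm)]
    simp

lemma natDegree_idPoly_le (n : ℕ) : (idPoly n).natDegree ≤ n := by
  refine natDegree_sum_le_of_forall_le _ _ fun m hm => (natDegree_C_mul_le _ _).trans ?_
  rw [natDegree_X_pow]
  exact Nat.lt_succ_iff.mp (Finset.mem_range.mp hm)

lemma coeff_one_sub_X_pow {R : Type*} [CommRing R] (n k : ℕ) :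
    ((1 - X : R[X]) ^ n).coeff k = (-1) ^ k * n.choose k := by
  induction n generalizing k with
  | zero => cases k <;> simp [coeff_one]
  | succ n ih =>
    cases k with
    | zero => simp [coeff_zero_eq_eval_zero]
    | succ k =>
      rw [pow_succ', sub_mul, one_mul, coeff_sub, coeff_X_mul, ih, ih, Nat.choose_succ_succ']
      push_cast
      ring

lemma choose_mul_choose_add_choose_mul_choose (N k : ℕ) :
    N.choose (k + 1) * (N + k + 2).choose (k + 1) + N.choose k * (N + k + 1).choose k
      = (N + 1).choose (k + 1) * (N + k + 1).choose (k + 1) := by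
  rcases Nat.lt_or_ge N k with hNk | hkN
  · simp [Nat.choose_eq_zero_of_lt, hNk, hNk.trans (Nat.lt_succ_self k)]
  obtain ⟨j, rfl⟩ := Nat.exists_eq_add_of_le hkN
  have h1 := Nat.choose_mul_succ_eq (k + j) (k + 1)
  have h2 := Nat.add_one_mul_choose_eq (k + j) k
  have h3 := Nat.choose_mul_succ_eq (k + j + k + 1) (k + 1)
  have h4 := Nat.choose_succ_right_eq (k + j + k + 1) k
  rw [show k + j + 1 - (k + 1) = j by omega] at h1
  rw [show k + j + k + 1 + 1 - (k + 1) = k + j + 1 by omega] at h3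
  rw [show k + j + k + 1 - k = k + j + 1 by omega] at h4
  -- `h1`–`h4` turn `N + 1` times each binomial on the left into a multiple of
  -- `(N + 1).choose (k + 1)` or `(N + k + 1).choose (k + 1)`, with `N = k + j`;
  -- what remains is `j (2k + j + 2) + (k + 1)^2 = (k + j + 1)^2`.
  refine Nat.eq_of_mul_eq_mul_left (show 0 < (k + j + 1) ^ 2 by positivity) ?_
  rw [show k + j + k + 2 = k + j + k + 1 + 1 by omega]
  zify at h1 h2 h3 h4 ⊢
  linear_combination ((k + j + k + 2).choose (k + 1) * (k + j + 1) : ℤ) * h1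
    - ((k + j + 1).choose (k + 1) * j : ℤ) * h3 + ((k + j + k + 1).choose k * (k + j + 1) : ℤ) * h2
    - ((k + j + 1).choose (k + 1) * (k + 1) : ℤ) * h4

lemma coeff_iterate_derivative_X_pow_mul_one_sub_X_pow (N k : ℕ) :
    (derivative^[N + 1] (X ^ (N + 1) * (1 - X) ^ N : ℝ[X])).coeff k
      = (N + 1).factorial * ((-1) ^ k * N.choose k * (N + k + 1).choose k) := by
  rw [coeff_iterate_derivative, coeff_X_pow_mul, coeff_one_sub_X_pow, nsmul_eq_mul,
    Nat.descFactorial_eq_factorial_mul_choose, ← Nat.choose_symm_add,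
    show k + (N + 1) = N + k + 1 by ring]
  push_cast
  ring

theorem factorial_mul_idPoly_succ_eq (N : ℕ) :
    C ((N + 1).factorial : ℝ) * idPoly (N + 1)
      = (1 - X) * derivative^[N + 1] (X ^ (N + 1) * (1 - X) ^ N) := by
  ext m
  rw [coeff_C_mul, coeff_idPoly_succ, sub_mul, one_mul, coeff_sub,
    coeff_iterate_derivative_X_pow_mul_one_sub_X_pow]
  cases m with
  | zero => simp
  | succ k =>
    have h : ((N.choose (k + 1) * (N + k + 2).choose (k + 1) + N.choose k * (N + k + 1).choose k
        : ℕ) : ℝ) = (N + 1).choose (k + 1) * (N + k + 1).choose (k + 1) := by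
      exact_mod_cast choose_mul_choose_add_choose_mul_choose N k
    rw [coeff_X_mul, coeff_iterate_derivative_X_pow_mul_one_sub_X_pow,
      show N + (k + 1) + 1 = N + k + 2 by ring, show N + (k + 1) = N + k + 1 by ring]
    push_cast at h
    linear_combination (-(N + 1).factorial * (-1 : ℝ) ^ (k + 1)) * h

lemma idPoly_eval_one {n : ℕ} (hn : 0 < n) : (idPoly n).eval 1 = 0 := by
  obtain ⟨N, rfl⟩ := Nat.exists_eq_add_one.mpr hn
  have h := congrArg (eval 1) (factorial_mul_idPoly_succ_eq N)
  simpa [(Nat.factorial_pos _).ne'] using h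

lemma isRoot_iterate_derivative_of_pow_dvd {R : Type*} [CommRing R] {p : R[X]} {a : R}
    {k i : ℕ} (h : (X - C a) ^ k ∣ p) (hi : i < k) : (derivative^[i] p).IsRoot a :=
  dvd_iff_isRoot.mp <| (dvd_pow_self _ (Nat.sub_ne_zero_of_lt hi)).trans
    (pow_sub_dvd_iterate_derivative_of_pow_dvd i h)

lemma integral_derivative_mul_eq_neg (u v : ℝ[X]) (h : (u * v).eval 0 = (u * v).eval 1) :
    ∫ t in (0 : ℝ)..1, (derivative u).eval t * v.eval t
      = -∫ t in (0 : ℝ)..1, u.eval t * (derivative v).eval t := by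
  rw [intervalIntegral.integral_mul_deriv_eq_deriv_mul (fun t _ => u.hasDerivAt t)
    (fun t _ => v.hasDerivAt t) ((derivative u).continuous.intervalIntegrable _ _)
    ((derivative v).continuous.intervalIntegrable _ _)]
  simp only [eval_mul] at h
  rw [h]
  ring

lemma integral_iterate_derivative_mul (p q : ℝ[X]) (k : ℕ)
    (h : ∀ i < k, (derivative^[i] p * derivative^[k - 1 - i] q).eval 0
      = (derivative^[i] p * derivative^[k - 1 - i] q).eval 1) :
    ∫ t in (0 : ℝ)..1, (derivative^[k] p).eval t * q.eval t
      = (-1) ^ k * ∫ t in (0 : ℝ)..1, p.eval t * (derivative^[k] q).eval t := by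
  induction k generalizing q with
  | zero => simp
  | succ k ih =>
    rw [Function.iterate_succ_apply', integral_derivative_mul_eq_neg _ _ (by simpa using h k),
      ih (derivative q) fun i hi => ?_, ← Function.iterate_succ_apply, pow_succ]
    · ring
    · rw [← Function.iterate_succ_apply, show (k - 1 - i).succ = k + 1 - 1 - i by omega]
      exact h i (by omega)

lemma integral_iterate_derivative_X_pow_mul_one_sub_X_pow_mul_eq_zero (N : ℕ) {q : ℝ[X]}
    (hq : q.natDegree ≤ N) (hq1 : q.IsRoot 1) :
    ∫ t in (0 : ℝ)..1,
      (derivative^[N + 1] (X ^ (N + 1) * (1 - X) ^ N)).eval t * q.eval t = 0 := by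
  have hdvd0 : (X - C 0) ^ (N + 1) ∣ (X ^ (N + 1) * (1 - X) ^ N : ℝ[X]) := by
    rw [C_0, sub_zero]
    exact dvd_mul_right _ _
  have hdvd1 : (X - C 1) ^ N ∣ (X ^ (N + 1) * (1 - X) ^ N : ℝ[X]) :=
    (pow_dvd_pow_of_dvd ⟨-1, by rw [C_1]; ring⟩ N).mul_left _
  rw [integral_iterate_derivative_mul _ _ _ fun i hi => ?_,
    iterate_derivative_eq_zero (by omega)]
  · simp
  rw [eval_mul, eval_mul, (isRoot_iterate_derivative_of_pow_dvd hdvd0 hi).eq_zero, zero_mul]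
  rcases Nat.lt_or_ge i N with hiN | hiN
  · rw [(isRoot_iterate_derivative_of_pow_dvd hdvd1 hiN).eq_zero, zero_mul]
  · rw [show N + 1 - 1 - i = 0 by omega, Function.iterate_zero_apply, hq1.eq_zero, mul_zero]

lemma integral_idPoly_mul_idPoly_div_eq_zero_of_lt {n m : ℕ} (hm : 0 < m) (hmn : m < n) :
    ∫ t in (0 : ℝ)..1, (idPoly n).eval t * (idPoly m).eval t / (1 - t) = 0 := by
  obtain ⟨N, rfl⟩ := Nat.exists_eq_add_one.mpr (hm.trans hmn)
  calc _ = ∫ t in (0 : ℝ)..1, ((N + 1).factorial : ℝ)⁻¹ *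
          ((derivative^[N + 1] (X ^ (N + 1) * (1 - X) ^ N)).eval t * (idPoly m).eval t) := by
        refine intervalIntegral.integral_congr_ae ?_
        filter_upwards [volume.ae_ne 1] with t ht _
        have h := congrArg (eval t) (factorial_mul_idPoly_succ_eq N)
        simp only [eval_mul, eval_C, eval_sub, eval_one, eval_X] at h
        field_simp [sub_ne_zero.mpr ht.symm]
        linear_combination (idPoly m).eval t * h
    _ = 0 := by
        rw [intervalIntegral.integral_const_mul,
          integral_iterate_derivative_X_pow_mul_one_sub_X_pow_mul_eq_zero N
            ((natDegree_idPoly_le m).trans (by omega)) (idPoly_eval_one hm), mul_zero]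

theorem idPoly_orthogonal (n m : ℕ) (hn : 0 < n) (hm : 0 < m) (hnm : n ≠ m) :
    ∫ t in (0:ℝ)..1, (idPoly n).eval t * (idPoly m).eval t / (1 - t) = 0 := by
  rcases hnm.lt_or_gt with h | h
  · simpa only [mul_comm] using integral_idPoly_mul_idPoly_div_eq_zero_of_lt hn h
  · exact integral_idPoly_mul_idPoly_div_eq_zero_of_lt hm h
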